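/- Let S, T, U be finsets of ι and let b, c ∈ ι with c ∈ U, b ∉ U, b ≠ c, b ∉ S ∪ T and c ∉ S ∪ T. Then (m_S * F_U) * (m_T * F_{{b,c}}) = m_{S ∪ T ∪ {b}} * F_{U \ {c}} + m_{S ∪ T ∪ {b,c}} * F_{U \ {c}} + m_{S ∪ T ∪ {c}} in R (the semantic identity underlying multiplication rule 17 of the Multiplication Rewriting Principle, where U ∩ V = {c} and V \ U = {b}). -/

import Mathlib

/-!
Every element of `ZMod 2` is idempotent, so `m (S ∪ T) = m S * m T` even when `S` and `T`
overlap, and `F U a = ∏ i ∈ U, (1 + a i) - 1`. After splitting off the factor `1 + a c` of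
`F U`, both sides become polynomials in `m S a`, `m T a`, `a b`, `a c` and
`∏ i ∈ U \ {c}, (1 + a i)`, and the identity is checked on the 32 Boolean values of these.
-/

variable {ι : Type*} [DecidableEq ι]

/-- Monomial semantics: `m S` evaluates an assignment `a` to `∏ i ∈ S, a i`. -/
def m (S : Finset ι) : (ι → ZMod 2) → ZMod 2 :=
  fun a => ∏ i ∈ S, a i

/-- Power-set sum semantics: `F U` evaluates `a` to the sum over nonempty subsets `A ⊆ U`
of `∏ i ∈ A, a i`. -/
def F (U : Finset ι) : (ι → ZMod 2) → ZMod 2 :=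
  fun a => ∑ A ∈ U.powerset.erase ∅, ∏ i ∈ A, a i

theorem Finset.prod_union_of_isIdempotentElem {M : Type*} [CommMonoid M] {f : ι → M}
    (hf : ∀ i, IsIdempotentElem (f i)) (s t : Finset ι) :
    ∏ i ∈ s ∪ t, f i = (∏ i ∈ s, f i) * ∏ i ∈ t, f i := by
  have hinter : IsIdempotentElem (∏ i ∈ s ∩ t, f i) :=
    Finset.prod_induction f IsIdempotentElem (fun _ _ ha hb => ha.mul hb)
      IsIdempotentElem.one fun i _ => hf i
  rw [← Finset.prod_union_inter,
    ← Finset.prod_sdiff (Finset.inter_subset_left.trans Finset.subset_union_left), mul_assoc,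
    hinter.eq]

theorem Finset.sum_powerset_erase_empty_prod {R : Type*} [CommRing R] (f : ι → R)
    (U : Finset ι) :
    ∑ A ∈ U.powerset.erase ∅, ∏ i ∈ A, f i = ∏ i ∈ U, (1 + f i) - 1 := by
  rw [Finset.sum_erase_eq_sub (Finset.empty_mem_powerset U), Finset.prod_one_add,
    Finset.prod_empty]

theorem ZMod.isIdempotentElem_two (x : ZMod 2) : IsIdempotentElem x := by
  fin_cases x <;> rfl

theorem m_union (S T : Finset ι) : m (S ∪ T) = m S * m T :=
  funext fun a => Finset.prod_union_of_isIdempotentElem (fun i => (a i).isIdempotentElem_two) S T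

theorem m_union_singleton_apply (S : Finset ι) (i : ι) (a : ι → ZMod 2) :
    m (S ∪ {i}) a = m S a * a i := by
  rw [m_union, Pi.mul_apply, m, m, Finset.prod_singleton]

theorem m_union_pair_apply (S : Finset ι) (b c : ι) (a : ι → ZMod 2) :
    m (S ∪ {b, c}) a = m S a * (a b * a c) := by
  rw [Finset.insert_eq, ← Finset.union_assoc, m_union_singleton_apply,
    m_union_singleton_apply, mul_assoc]

theorem F_apply (U : Finset ι) (a : ι → ZMod 2) : F U a = ∏ i ∈ U, (1 + a i) - 1 :=
  Finset.sum_powerset_erase_empty_prod a U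

theorem F_apply_of_mem {U : Finset ι} {c : ι} (hc : c ∈ U) (a : ι → ZMod 2) :
    F U a = (1 + a c) * ∏ i ∈ U \ {c}, (1 + a i) - 1 := by
  rw [F_apply, Finset.sdiff_singleton_eq_erase, Finset.mul_prod_erase U (fun i => 1 + a i) hc]

theorem F_pair_apply (b c : ι) (a : ι → ZMod 2) : F {b, c} a = (1 + a b) * (1 + a c) - 1 := by
  rw [F_apply, Finset.insert_eq,
    Finset.prod_union_of_isIdempotentElem (fun i => (1 + a i).isIdempotentElem_two),
    Finset.prod_singleton, Finset.prod_singleton]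

theorem stmt16_general (S T U : Finset ι) (b c : ι)
    (hcU : c ∈ U) :
    (m S * F U) * (m T * F {b, c})
      = m (S ∪ T ∪ {b}) * F (U \ {c}) + m (S ∪ T ∪ {b, c}) * F (U \ {c})
        + m (S ∪ T ∪ {c}) := by
  have boolean_identity : ∀ s t β γ P : ZMod 2,
      s * ((1 + γ) * P - 1) * (t * ((1 + β) * (1 + γ) - 1))
        = s * t * β * (P - 1) + s * t * (β * γ) * (P - 1) + s * t * γ := by
    decide
  funext a
  simp only [Pi.mul_apply, Pi.add_apply, m_union_singleton_apply, m_union_pair_apply]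
  rw [m_union, Pi.mul_apply, F_apply_of_mem hcU, F_pair_apply, F_apply (U \ {c})]
  exact boolean_identity _ _ _ _ _

theorem stmt16 (S T U : Finset ι) (b c : ι)
    (hcU : c ∈ U) (hbU : b ∉ U) (hbc : b ≠ c)
    (hbST : b ∉ S ∪ T) (hcST : c ∉ S ∪ T) :
    (m S * F U) * (m T * F {b, c})
      = m (S ∪ T ∪ {b}) * F (U \ {c}) + m (S ∪ T ∪ {b, c}) * F (U \ {c})
        + m (S ∪ T ∪ {c}) :=
  stmt16_general S T U b c hcU
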